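/- Let d ≥ 2 and let F be the swap operator on ℂ^d ⊗ ℂ^d, with symmetric and antisymmetric projectors Π_sym = (I + F)/2 and Π_anti = (I − F)/2. Then for every d²×d² complex matrix ρ, the twirl ∫ (U ⊗ U) ρ (U ⊗ U)† dU over the Haar probability measure on the unitary group U(d) equals Tr(ρ Π_sym) · (2/(d(d+1))) Π_sym + Tr(ρ Π_anti) · (2/(d(d−1))) Π_anti. -/

import Mathlib

open scoped Kronecker Matrix
open MeasureTheory

noncomputable instance {n : Type*} [Fintype n] : MeasurableSpace (Matrix n n ℂ) :=
  MeasurableSpace.pi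

/-- The swap operator `F` on `ℂ^d ⊗ ℂ^d`: `F(x ⊗ y) = y ⊗ x`. -/
def swapOp (d : ℕ) : Matrix (Fin d × Fin d) (Fin d × Fin d) ℂ :=
  Matrix.of fun p q => if q.1 = p.2 ∧ q.2 = p.1 then 1 else 0

/-- The projector onto the symmetric subspace, `Π_sym = (I + F)/2`. -/
noncomputable def PiSym (d : ℕ) : Matrix (Fin d × Fin d) (Fin d × Fin d) ℂ :=
  (2 : ℂ)⁻¹ • (1 + swapOp d)

/-- The projector onto the antisymmetric subspace, `Π_anti = (I − F)/2`. -/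
noncomputable def PiAnti (d : ℕ) : Matrix (Fin d × Fin d) (Fin d × Fin d) ℂ :=
  (2 : ℂ)⁻¹ • (1 - swapOp d)

/-!
The twirl `T(ρ)` commutes with every `U ⊗ U`, by left invariance of `μ`. Testing this against
diagonal phase matrices and permutation matrices forces a matrix commuting with all `U ⊗ U` into
the span of `1`, the swap `F` and the projector onto `span {eₖ ⊗ eₖ}`; a single Householder
reflection removes the last one. So `T(ρ) = a • 1 + b • F`. Since `Π_sym` and `Π_anti` commute with
every `U ⊗ U` as well, `Tr (T(ρ) Π) = Tr (ρ Π)` for both projectors, and these two traces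
determine `a` and `b`.
-/

open Matrix

instance Matrix.instBorelSpace {n : Type*} [Fintype n] : BorelSpace (Matrix n n ℂ) :=
  inferInstanceAs (BorelSpace (n → n → ℂ))

instance Matrix.unitaryGroup.instCompactSpace {n 𝕜 : Type*} [Fintype n] [DecidableEq n]
    [RCLike 𝕜] : CompactSpace (unitaryGroup n 𝕜) := by
  have hK : IsCompact (Set.univ.pi fun _ => Set.univ.pi fun _ => Metric.closedBall 0 1 :
      Set (Matrix n n 𝕜)) :=
    isCompact_univ_pi fun _ => isCompact_univ_pi fun _ => isCompact_closedBall _ _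
  refine isCompact_iff_compactSpace.mp <|
    hK.of_isClosed_subset (isClosed_unitary (R := Matrix n n 𝕜)) fun U hU => ?_
  simpa [Set.mem_pi] using entry_norm_bound_of_unitary hU

@[fun_prop]
theorem Continuous.matrix_kronecker {X l m n p R : Type*} [TopologicalSpace X] [TopologicalSpace R]
    [Mul R] [ContinuousMul R] {A : X → Matrix l m R} {B : X → Matrix n p R}
    (hA : Continuous A) (hB : Continuous B) : Continuous fun x => A x ⊗ₖ B x :=
  continuous_matrix fun _ _ => (hA.matrix_elem _ _).mul (hB.matrix_elem _ _)

section MatrixIntegral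

variable {α m n o 𝕜 : Type*} [MeasurableSpace α] [RCLike 𝕜] {μ : Measure α}

noncomputable def matrixIntegral (μ : Measure α) (f : α → Matrix m n 𝕜) : Matrix m n 𝕜 :=
  of fun i j => ∫ x, f x i j ∂μ

theorem matrixIntegral_mul [Fintype n] {f : α → Matrix m n 𝕜}
    (hf : ∀ i j, Integrable (fun x => f x i j) μ) (B : Matrix n o 𝕜) :
    matrixIntegral μ f * B = matrixIntegral μ fun x => f x * B := by
  ext i k
  simp only [matrixIntegral, mul_apply, of_apply]
  rw [integral_finsetSum _ fun j _ => (hf i j).mul_const _]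
  simp only [integral_mul_const]

theorem mul_matrixIntegral [Fintype m] {f : α → Matrix m n 𝕜}
    (hf : ∀ i j, Integrable (fun x => f x i j) μ) (A : Matrix o m 𝕜) :
    A * matrixIntegral μ f = matrixIntegral μ fun x => A * f x := by
  ext i k
  simp only [matrixIntegral, mul_apply, of_apply]
  rw [integral_finsetSum _ fun j _ => (hf j k).const_mul _]
  simp only [integral_const_mul]

theorem trace_matrixIntegral [Fintype m] {f : α → Matrix m m 𝕜}
    (hf : ∀ i, Integrable (fun x => f x i i) μ) :
    trace (matrixIntegral μ f) = ∫ x, trace (f x) ∂μ := by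
  simp only [trace, diag, matrixIntegral, of_apply]
  rw [integral_finsetSum _ fun i _ => hf i]

end MatrixIntegral

section Twirl

variable {n : Type*} [Fintype n] [DecidableEq n] (μ : Measure (unitaryGroup n ℂ))

noncomputable def twirl (ρ : Matrix (n × n) (n × n) ℂ) : Matrix (n × n) (n × n) ℂ :=
  matrixIntegral μ fun U : unitaryGroup n ℂ =>
    ((U : Matrix n n ℂ) ⊗ₖ (U : Matrix n n ℂ)) * ρ * ((U : Matrix n n ℂ) ⊗ₖ (U : Matrix n n ℂ))ᴴ

variable {μ} in
theorem integrable_apply_of_continuous [IsFiniteMeasure μ] {m o : Type*}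
    {f : unitaryGroup n ℂ → Matrix m o ℂ} (hf : Continuous f) (i : m) (j : o) :
    Integrable (fun U => f U i j) μ :=
  (hf.matrix_elem i j).integrable_of_hasCompactSupport (.of_compactSpace _)

theorem kronecker_mul_twirl_mul [IsFiniteMeasure μ]
    (hinv : ∀ V : unitaryGroup n ℂ, MeasurePreserving (fun W => V * W) μ μ)
    (ρ : Matrix (n × n) (n × n) ℂ) (V : unitaryGroup n ℂ) :
    ((V : Matrix n n ℂ) ⊗ₖ (V : Matrix n n ℂ)) * twirl μ ρ *
      ((V : Matrix n n ℂ) ⊗ₖ (V : Matrix n n ℂ))ᴴ = twirl μ ρ := by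
  rw [twirl, mul_matrixIntegral (integrable_apply_of_continuous (by fun_prop)),
    matrixIntegral_mul (integrable_apply_of_continuous (by fun_prop))]
  ext p q
  refine Eq.trans ?_ ((hinv V).integral_comp
    (Homeomorph.mulLeft V).toMeasurableEquiv.measurableEmbedding fun W => _)
  simp only [matrixIntegral, of_apply, Submonoid.coe_mul, mul_kronecker_mul, conjTranspose_mul,
    mul_assoc]

theorem commute_twirl_kronecker [IsFiniteMeasure μ]
    (hinv : ∀ V : unitaryGroup n ℂ, MeasurePreserving (fun W => V * W) μ μ)
    (ρ : Matrix (n × n) (n × n) ℂ) {V : Matrix n n ℂ} (hV : V ∈ unitaryGroup n ℂ) :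
    Commute (twirl μ ρ) (V ⊗ₖ V) := by
  have hW : star (V ⊗ₖ V) * (V ⊗ₖ V) = 1 := (kronecker_mem_unitary hV hV).1
  calc twirl μ ρ * (V ⊗ₖ V) = (V ⊗ₖ V) * twirl μ ρ * (star (V ⊗ₖ V) * (V ⊗ₖ V)) := by
        rw [← mul_assoc, star_eq_conjTranspose, kronecker_mul_twirl_mul μ hinv ρ ⟨V, hV⟩]
    _ = (V ⊗ₖ V) * twirl μ ρ := by rw [hW, mul_one]

theorem trace_twirl_mul [IsProbabilityMeasure μ] (ρ : Matrix (n × n) (n × n) ℂ)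
    {A : Matrix (n × n) (n × n) ℂ} (hA : ∀ U ∈ unitaryGroup n ℂ, Commute A (U ⊗ₖ U)) :
    trace (twirl μ ρ * A) = trace (ρ * A) := by
  have hconj (U : unitaryGroup n ℂ) :
      trace (((U : Matrix n n ℂ) ⊗ₖ (U : Matrix n n ℂ)) * ρ *
        ((U : Matrix n n ℂ) ⊗ₖ (U : Matrix n n ℂ))ᴴ * A) = trace (ρ * A) := by
    set W := (U : Matrix n n ℂ) ⊗ₖ (U : Matrix n n ℂ)
    have hW : star W * W = 1 := (kronecker_mem_unitary U.2 U.2).1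
    calc trace (W * ρ * Wᴴ * A) = trace (ρ * (star W * (A * W))) := by
          rw [mul_assoc, mul_assoc, trace_mul_comm, star_eq_conjTranspose]
          simp only [mul_assoc]
      _ = trace (ρ * A) := by
          rw [show A * W = W * A from (hA U U.2).eq, ← mul_assoc (star W), hW, one_mul]
  rw [twirl, matrixIntegral_mul (integrable_apply_of_continuous (by fun_prop)),
    trace_matrixIntegral fun i => integrable_apply_of_continuous (by fun_prop) i i]
  simp [hconj]

end Twirl

namespace Matrix

variable {ι R : Type*} [DecidableEq ι]

theorem permMatrix_kronecker_permMatrix (σ : Equiv.Perm ι) :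
    σ.permMatrix ℂ ⊗ₖ σ.permMatrix ℂ = Equiv.Perm.permMatrix ℂ (σ.prodCongr σ) := by
  ext p q
  simp [PEquiv.toMatrix_apply, Prod.ext_iff, ← ite_and, and_comm]

variable [Fintype ι]

theorem apply_eq_zero_of_commute_diagonal [CommRing R] [NoZeroDivisors R] {M : Matrix ι ι R}
    {w : ι → R} (h : Commute M (diagonal w)) {i j : ι} (hw : w i ≠ w j) : M i j = 0 := by
  have hij : M i j * w j = w i * M i j := by simpa using congr_fun (congr_fun h.eq i) j
  exact (mul_eq_zero.mp (by linear_combination hij : M i j * (w j - w i) = 0)).resolve_right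
    (sub_ne_zero.mpr hw.symm)

theorem apply_apply_of_commute_permMatrix [Semiring R] {M : Matrix ι ι R} {σ : Equiv.Perm ι}
    (h : Commute M (σ.permMatrix R)) (i j : ι) : M (σ i) (σ j) = M i j := by
  have := congr_fun (congr_fun h.eq i) (σ j)
  simp only [PEquiv.toMatrix_toPEquiv_mul, PEquiv.mul_toMatrix_toPEquiv, submatrix_apply, id,
    Equiv.symm_apply_apply] at this
  exact this.symm

theorem diagonal_mem_unitaryGroup {t : ι → ℂ} (ht : ∀ i, t i ∈ unitary ℂ) :
    diagonal t ∈ unitaryGroup ι ℂ := by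
  rw [mem_unitaryGroup_iff', star_eq_conjTranspose, diagonal_conjTranspose, diagonal_mul_diagonal,
    ← diagonal_one]
  exact congrArg diagonal (funext fun i => (ht i).1)

theorem permMatrix_mem_unitaryGroup (σ : Equiv.Perm ι) : σ.permMatrix ℂ ∈ unitaryGroup ι ℂ := by
  rw [mem_unitaryGroup_iff', star_eq_conjTranspose, conjTranspose_permMatrix, ← permMatrix_mul,
    mul_inv_cancel, permMatrix_one]

theorem one_sub_two_smul_vecMulVec_mem_unitaryGroup {v : ι → ℂ} (hv : star v ⬝ᵥ v = 1) :
    1 - (2 : ℂ) • vecMulVec v (star v) ∈ unitaryGroup ι ℂ := by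
  have hP : vecMulVec v (star v) * vecMulVec v (star v) = vecMulVec v (star v) := by
    rw [vecMulVec_mul_vecMulVec, hv, one_smul]
  rw [mem_unitaryGroup_iff', star_eq_conjTranspose, conjTranspose_sub, conjTranspose_one,
    conjTranspose_smul, conjTranspose_vecMulVec, star_star]
  simp only [sub_mul, mul_sub, one_mul, mul_one, smul_mul_smul_comm, hP, star_ofNat]
  module

end Matrix

theorem Equiv.Perm.exists_apply_eq_and_apply_eq {α : Type*} [Finite α] {i j k l : α}
    (hij : i ≠ j) (hkl : k ≠ l) : ∃ σ : Equiv.Perm α, σ i = k ∧ σ j = l := by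
  obtain ⟨σ, hσ⟩ := Equiv.Perm.exists_extending_pair ![i, j] ![k, l]
    (injective_pair_iff_ne.mpr hij) (injective_pair_iff_ne.mpr hkl)
  exact ⟨σ, hσ 0, hσ 1⟩

section KroneckerCommutant

variable {ι : Type*} [Fintype ι] [DecidableEq ι] {M : Matrix (ι × ι) (ι × ι) ℂ}

theorem eq_or_eq_swap_of_commute_kronecker (hM : ∀ U ∈ unitaryGroup ι ℂ, Commute M (U ⊗ₖ U))
    {p q : ι × ι} (hpq : M p q ≠ 0) : q = p ∨ q = p.swap := by
  let phase (x i : ι) : ℂ := if i = x then Complex.I else 1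
  have phase_mul_eq_one (x a b : ι) : phase x a * phase x b = 1 ↔ a ≠ x ∧ b ≠ x := by
    unfold phase; split_ifs <;> norm_num [*, Complex.ext_iff]
  have hmem (x : ι) : x ∈ ({p.1, p.2} : Set ι) ↔ x ∈ ({q.1, q.2} : Set ι) := by
    have hx : diagonal (phase x) ∈ unitaryGroup ι ℂ := diagonal_mem_unitaryGroup fun i => by
      unfold phase; split_ifs <;> simp [Unitary.mem_iff_star_mul_self]
    have hcomm := hM _ hx
    rw [diagonal_kronecker_diagonal] at hcomm
    have hw : phase x p.1 * phase x p.2 = phase x q.1 * phase x q.2 :=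
      by_contra fun hne => hpq (apply_eq_zero_of_commute_diagonal hcomm hne)
    have := (phase_mul_eq_one x p.1 p.2).symm.trans (hw ▸ phase_mul_eq_one x q.1 q.2)
    simp only [Set.mem_insert_iff, Set.mem_singleton_iff]
    grind
  rcases Set.pair_eq_pair_iff.mp (Set.ext hmem) with ⟨h1, h2⟩ | ⟨h1, h2⟩
  · exact Or.inl (Prod.ext h1.symm h2.symm)
  · exact Or.inr (Prod.ext h2.symm h1.symm)

theorem apply_perm_of_commute_kronecker (hM : ∀ U ∈ unitaryGroup ι ℂ, Commute M (U ⊗ₖ U))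
    (σ : Equiv.Perm ι) (p q : ι × ι) : M (σ p.1, σ p.2) (σ q.1, σ q.2) = M p q := by
  have hσ := hM _ (permMatrix_mem_unitaryGroup σ)
  rw [permMatrix_kronecker_permMatrix] at hσ
  exact apply_apply_of_commute_permMatrix hσ p q

end KroneckerCommutant

section Swap

variable {d : ℕ}

theorem swapOp_eq_permMatrix :
    swapOp d = Equiv.Perm.permMatrix ℂ (Equiv.prodComm (Fin d) (Fin d)) := by
  ext p q
  simp [swapOp, PEquiv.toMatrix_apply, Prod.ext_iff, and_comm, eq_comm]

theorem swapOp_apply (p q : Fin d × Fin d) : swapOp d p q = if q = p.swap then 1 else 0 := by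
  simp [swapOp_eq_permMatrix, eq_comm]

theorem swapOp_mul_swapOp : swapOp d * swapOp d = 1 := by
  rw [swapOp_eq_permMatrix, ← permMatrix_mul, show Equiv.prodComm (Fin d) (Fin d) *
    Equiv.prodComm (Fin d) (Fin d) = 1 from Equiv.ext fun _ => rfl, permMatrix_one]

theorem trace_swapOp : trace (swapOp d) = d := by
  rw [trace, Fintype.sum_prod_type]
  simp [swapOp_apply, Prod.ext_iff, eq_comm]

theorem swapOp_mul_kronecker (A B : Matrix (Fin d) (Fin d) ℂ) :
    swapOp d * (A ⊗ₖ B) = (B ⊗ₖ A) * swapOp d := by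
  ext p q
  simp [swapOp_eq_permMatrix, PEquiv.toMatrix_toPEquiv_mul, PEquiv.mul_toMatrix_toPEquiv, mul_comm]

theorem commute_swapOp_kronecker_self (A : Matrix (Fin d) (Fin d) ℂ) :
    Commute (swapOp d) (A ⊗ₖ A) :=
  swapOp_mul_kronecker A A

theorem commute_PiSym_kronecker_self (A : Matrix (Fin d) (Fin d) ℂ) :
    Commute (PiSym d) (A ⊗ₖ A) :=
  ((Commute.one_left _).add_left (commute_swapOp_kronecker_self A)).smul_left _

theorem commute_PiAnti_kronecker_self (A : Matrix (Fin d) (Fin d) ℂ) :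
    Commute (PiAnti d) (A ⊗ₖ A) :=
  ((Commute.one_left _).sub_left (commute_swapOp_kronecker_self A)).smul_left _

end Swap

section Commutant

variable {d : ℕ}

def diagProj (d : ℕ) : Matrix (Fin d × Fin d) (Fin d × Fin d) ℂ :=
  diagonal fun p => if p.1 = p.2 then 1 else 0

theorem eq_smul_one_add_smul_swapOp_add_smul_diagProj {M : Matrix (Fin d × Fin d) (Fin d × Fin d) ℂ}
    (hM : ∀ U ∈ unitaryGroup (Fin d) ℂ, Commute M (U ⊗ₖ U)) {i j : Fin d} (hij : i ≠ j) :
    M = M (i, j) (i, j) • 1 + M (i, j) (j, i) • swapOp d +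
      (M (i, i) (i, i) - M (i, j) (i, j) - M (i, j) (j, i)) • diagProj d := by
  have hoff {k l : Fin d} (hkl : k ≠ l) :
      M (k, l) (k, l) = M (i, j) (i, j) ∧ M (k, l) (l, k) = M (i, j) (j, i) := by
    obtain ⟨σ, rfl, rfl⟩ := Equiv.Perm.exists_apply_eq_and_apply_eq hij hkl
    exact ⟨apply_perm_of_commute_kronecker hM σ (i, j) (i, j),
      apply_perm_of_commute_kronecker hM σ (i, j) (j, i)⟩
  have hdiag (k : Fin d) : M (k, k) (k, k) = M (i, i) (i, i) := by
    simpa using apply_perm_of_commute_kronecker hM (Equiv.swap i k) (i, i) (i, i)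
  ext ⟨k, l⟩ q
  by_cases hq : q = (k, l) ∨ q = (l, k)
  · rcases eq_or_ne k l with rfl | hkl
    · rcases hq with rfl | rfl <;> simp [diagProj, one_apply, swapOp_apply, hdiag]
    · rcases hq with rfl | rfl <;>
        simp [diagProj, one_apply, swapOp_apply, hkl, hkl.symm, hoff hkl]
  · rw [not_or] at hq
    have h0 : M (k, l) q = 0 := by_contra fun h =>
      (eq_or_eq_swap_of_commute_kronecker hM h).elim hq.1 hq.2
    simp [diagProj, one_apply, swapOp_apply, h0, Ne.symm hq.1, hq.2]

theorem eq_zero_of_forall_commute_smul_diagProj {i j : Fin d} (hij : i ≠ j) {e : ℂ}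
    (h : ∀ U ∈ unitaryGroup (Fin d) ℂ, Commute (e • diagProj d) (U ⊗ₖ U)) : e = 0 := by
  -- Unlike monomial unitaries, this Householder reflection mixes `eᵢ` and `eⱼ`, which `diagProj`
  -- detects at the entry `((i, i), (i, j))`.
  set v : Fin d → ℂ := Pi.single i (3 / 5) + Pi.single j (4 / 5)
  have hv : star v ⬝ᵥ v = 1 := by
    simp only [v, star_add, Pi.star_single, add_dotProduct, single_dotProduct]
    simp [hij, hij.symm]
    norm_num
  set V := 1 - (2 : ℂ) • vecMulVec v (star v)
  have hVii : V i i = 7 / 25 := by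
    simp [V, v, vecMulVec_apply, hij.symm]
    norm_num
  have hVij : V i j = -24 / 25 := by
    simp [V, v, vecMulVec_apply, hij, hij.symm]
    norm_num
  have hcomm := congr_fun (congr_fun (h V (one_sub_two_smul_vecMulVec_mem_unitaryGroup hv)).eq
    (i, i)) (i, j)
  simpa [diagProj, diagonal_mul, mul_diagonal, hij, hVii, hVij] using hcomm

theorem exists_eq_smul_one_add_smul_swapOp (hd : 2 ≤ d)
    {M : Matrix (Fin d × Fin d) (Fin d × Fin d) ℂ}
    (hM : ∀ U ∈ unitaryGroup (Fin d) ℂ, Commute M (U ⊗ₖ U)) :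
    ∃ a b : ℂ, M = a • 1 + b • swapOp d := by
  obtain ⟨i, j, hij⟩ : ∃ i j : Fin d, i ≠ j := ⟨⟨0, by omega⟩, ⟨1, hd⟩, by simp [Fin.ext_iff]⟩
  set a := M (i, j) (i, j)
  set b := M (i, j) (j, i)
  set e := M (i, i) (i, i) - a - b
  have hM_eq : M = a • 1 + b • swapOp d + e • diagProj d :=
    eq_smul_one_add_smul_swapOp_add_smul_diagProj hM hij
  have he : e = 0 := eq_zero_of_forall_commute_smul_diagProj hij fun U hU => by
    rw [eq_sub_iff_add_eq'.mpr hM_eq.symm]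
    exact (hM U hU).sub_left (((Commute.one_left _).smul_left a).add_left
      ((commute_swapOp_kronecker_self U).smul_left b))
  exact ⟨a, b, by rw [hM_eq, he, zero_smul, add_zero]⟩

end Commutant

section Projectors

variable {d : ℕ} (a b : ℂ)

theorem smul_one_add_smul_swapOp_eq :
    a • 1 + b • swapOp d = (a + b) • PiSym d + (a - b) • PiAnti d := by
  simp only [PiSym, PiAnti, smul_smul]
  module

theorem trace_smul_one_add_smul_swapOp_mul_PiSym :
    trace ((a • 1 + b • swapOp d) * PiSym d) = (a + b) * (d * (d + 1) / 2) := by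
  simp only [PiSym, Matrix.mul_smul, add_mul, mul_add, smul_mul, one_mul, mul_one,
    swapOp_mul_swapOp, trace_smul, trace_add, trace_one, trace_swapOp, Fintype.card_prod,
    Fintype.card_fin]
  push_cast
  ring

theorem trace_smul_one_add_smul_swapOp_mul_PiAnti :
    trace ((a • 1 + b • swapOp d) * PiAnti d) = (a - b) * (d * (d - 1) / 2) := by
  simp only [PiAnti, Matrix.mul_smul, add_mul, mul_sub, smul_mul, one_mul, mul_one,
    swapOp_mul_swapOp, trace_smul, trace_add, trace_sub, trace_one, trace_swapOp,
    Fintype.card_prod, Fintype.card_fin]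
  push_cast
  ring

end Projectors

/-- Twirling over the Haar probability measure on `U(d)`:
`∫ (U⊗U) ρ (U⊗U)† dU = Tr(ρ Π_sym)·(2/(d(d+1))) Π_sym + Tr(ρ Π_anti)·(2/(d(d−1))) Π_anti`,
the integral being taken entrywise. The Haar probability measure is characterized as a
left-invariant probability measure on the compact group `U(d)`. -/
theorem twirl_formula {d : ℕ} (hd : 2 ≤ d)
    (μ : Measure (Matrix.unitaryGroup (Fin d) ℂ)) [IsProbabilityMeasure μ]
    (hinv : ∀ V : Matrix.unitaryGroup (Fin d) ℂ,
      MeasurePreserving (fun W => V * W) μ μ)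
    (ρ : Matrix (Fin d × Fin d) (Fin d × Fin d) ℂ) :
    (Matrix.of fun p q => ∫ U : Matrix.unitaryGroup (Fin d) ℂ,
        (((U : Matrix (Fin d) (Fin d) ℂ) ⊗ₖ (U : Matrix (Fin d) (Fin d) ℂ)) * ρ *
          ((U : Matrix (Fin d) (Fin d) ℂ) ⊗ₖ (U : Matrix (Fin d) (Fin d) ℂ))ᴴ) p q ∂μ) =
      (ρ * PiSym d).trace • ((2 / ((d : ℂ) * ((d : ℂ) + 1))) • PiSym d) +
      (ρ * PiAnti d).trace • ((2 / ((d : ℂ) * ((d : ℂ) - 1))) • PiAnti d) := by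
  obtain ⟨a, b, hab⟩ := exists_eq_smul_one_add_smul_swapOp hd fun U hU =>
    commute_twirl_kronecker μ hinv ρ hU
  have hd₀ : (d : ℂ) ≠ 0 := Nat.cast_ne_zero.mpr (by omega)
  have hd₁ : (d : ℂ) + 1 ≠ 0 := by norm_cast
  have hd₂ : (d : ℂ) - 1 ≠ 0 := sub_ne_zero.mpr (Nat.cast_ne_one.mpr (by omega))
  change twirl μ ρ = _
  rw [← trace_twirl_mul μ ρ fun U _ => commute_PiSym_kronecker_self U,
    ← trace_twirl_mul μ ρ fun U _ => commute_PiAnti_kronecker_self U, hab,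
    trace_smul_one_add_smul_swapOp_mul_PiSym, trace_smul_one_add_smul_swapOp_mul_PiAnti,
    smul_smul, smul_smul, smul_one_add_smul_swapOp_eq]
  congr 2 <;> field_simp
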